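/- Let (X, ⊥, F) be an O-space. Then for all A, B, C ∈ F: if A ⊗ B = B ⊗ A, then (C ⊗ A) ⊗ B = (C ⊗ B) ⊗ A. -/
import Mathlib


variable {X : Type*}

/-- Orthogonal complement: `A^⊥ = {b : b ⊥ a for all a ∈ A}`. -/
def oc (R : X → X → Prop) (A : Set X) : Set X := {b | ∀ a ∈ A, R b a}

/-- Closure: `cl(A) = (A^⊥)^⊥`. -/
def ocl (R : X → X → Prop) (A : Set X) : Set X := oc R (oc R A)

/-- The zero set `Z = {y : y ⊥ x for all x}`. -/
def zset (R : X → X → Prop) : Set X := {y | ∀ x, R y x}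

/-- Sasaki projection `A ⊗ B = cl(B) ∩ (cl(B) ∩ A^⊥)^⊥`. -/
def sproj (R : X → X → Prop) (A B : Set X) : Set X :=
  ocl R B ∩ oc R (ocl R B ∩ oc R A)

/-- Dual of the Sasaki projection: `A ⊕ B = (B^⊥ ⊗ A^⊥)^⊥`. -/
def sdual (R : X → X → Prop) (A B : Set X) : Set X :=
  oc R (sproj R (oc R B) (oc R A))

/-- Set orthogonality: `A ⊥ B` iff `a ⊥ b` for all `a ∈ A`, `b ∈ B`. -/
def orth (R : X → X → Prop) (A B : Set X) : Prop := ∀ a ∈ A, ∀ b ∈ B, R a b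

/-- An O-space: a symmetric relation satisfying Z, together with a family `F`
of subsets satisfying properties F, O and A. -/
structure IsOSpace (R : X → X → Prop) (F : Set (Set X)) : Prop where
  symm : ∀ x y : X, R x y → R y x
  zero : ∀ x : X, R x x → x ∈ zset R
  flats : ∀ A ∈ F, A = ocl R A
  singcl_mem : ∀ x : X, ocl R {x} ∈ F
  z_mem : zset R ∈ F
  oc_mem : ∀ A ∈ F, oc R A ∈ F
  sproj_mem : ∀ A ∈ F, ∀ B ∈ F, sproj R A B ∈ F
  o1 : ∀ x : X, ∀ A ∈ F, x ∈ ocl R (sproj R {x} A ∪ sproj R {x} (oc R A))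
  o2 : ∀ x : X, ∀ A ∈ F, sproj R {x} A ⊆ ocl R ({x} ∪ sproj R {x} (oc R A))
  a : ∀ A ∈ F, ∀ B ∈ F, sproj R A B ⊆ ⋃ a ∈ A, sproj R {a} B

section Lemmas

variable {R : X → X → Prop} {F : Set (Set X)}

lemma oc_anti {A B : Set X} (h : A ⊆ B) : oc R B ⊆ oc R A :=
  fun x hx a ha => hx a (h ha)

lemma subset_ocl (hs : ∀ x y : X, R x y → R y x) (A : Set X) : A ⊆ ocl R A :=
  fun a ha b hb => hs b a (hb a ha)

lemma oc_ocl (hs : ∀ x y : X, R x y → R y x) (A : Set X) : oc R (ocl R A) = oc R A :=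
  subset_antisymm (oc_anti (subset_ocl hs A)) (subset_ocl hs (oc R A))

lemma ocl_oc (hs : ∀ x y : X, R x y → R y x) (A : Set X) : ocl R (oc R A) = oc R A :=
  oc_ocl hs A

lemma ocl_mono {A B : Set X} (h : A ⊆ B) : ocl R A ⊆ ocl R B :=
  oc_anti (oc_anti h)

lemma oc_union (A B : Set X) : oc R (A ∪ B) = oc R A ∩ oc R B := by
  ext x
  constructor
  · exact fun hx => ⟨fun a ha => hx a (Or.inl ha), fun a ha => hx a (Or.inr ha)⟩
  · rintro ⟨h1, h2⟩ a (ha | ha)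
    · exact h1 a ha
    · exact h2 a ha

lemma ocl_congr {A B : Set X} (h : oc R A = oc R B) : ocl R A = ocl R B :=
  congrArg (oc R) h

lemma ocl_union_ocl_left (hs : ∀ x y : X, R x y → R y x) (A B : Set X) :
    ocl R (ocl R A ∪ B) = ocl R (A ∪ B) := by
  apply ocl_congr
  rw [oc_union, oc_union, oc_ocl hs]

lemma ocl_union_ocl_right (hs : ∀ x y : X, R x y → R y x) (A B : Set X) :
    ocl R (A ∪ ocl R B) = ocl R (A ∪ B) := by
  apply ocl_congr
  rw [oc_union, oc_union, oc_ocl hs]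

lemma flat_of_mem (h : IsOSpace R F) {A : Set X} (hA : A ∈ F) : ocl R A = A :=
  (h.flats A hA).symm

/-- `sproj` with a flat second argument. -/
lemma sproj_flat {A B : Set X} (hB : ocl R B = B) :
    sproj R A B = B ∩ oc R (B ∩ oc R A) := by rw [sproj, hB]

/-- Orthomodular law. -/
lemma om (h : IsOSpace R F) {a b : Set X} (haF : a ∈ F) (hb : ocl R b = b)
    (hab : a ⊆ b) : b = ocl R (a ∪ (b ∩ oc R a)) := by
  have hs := h.symm
  have hfa : ocl R a = a := flat_of_mem h haF
  apply subset_antisymm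
  · intro x hx
    have s1 : sproj R {x} a ⊆ a := by
      rw [sproj, hfa]; exact Set.inter_subset_left
    have s2 : sproj R {x} (oc R a) ⊆ oc R a := by
      rw [sproj, ocl_oc hs]; exact Set.inter_subset_left
    have s4 : sproj R {x} (oc R (oc R a)) ⊆ a := by
      rw [sproj]
      refine Set.inter_subset_left.trans ?_
      show ocl R (ocl R a) ⊆ a
      rw [hfa, hfa]
    have s3 : sproj R {x} (oc R a) ⊆ b := by
      refine (h.o2 x (oc R a) (h.oc_mem a haF)).trans ?_
      rw [← hb]
      apply ocl_mono
      apply Set.union_subset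
      · exact Set.singleton_subset_iff.mpr hx
      · exact s4.trans hab
    have := h.o1 x a haF
    refine ocl_mono ?_ this
    exact Set.union_subset_union s1 (Set.subset_inter s3 s2)
  · have hsub : a ∪ (b ∩ oc R a) ⊆ b := Set.union_subset hab Set.inter_subset_left
    exact (ocl_mono hsub).trans (le_of_eq hb)

/-- Dual orthomodular law, sproj-style form. -/
lemma dom (h : IsOSpace R F) {u v : Set X} (hu : ocl R u = u) (hvF : v ∈ F)
    (huv : u ⊆ v) : v ∩ oc R (v ∩ oc R u) = u := by
  have hs := h.symm
  have hfv : ocl R v = v := flat_of_mem h hvF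
  have h1 : oc R u = ocl R (oc R v ∪ (oc R u ∩ v)) := by
    have := om h (h.oc_mem v hvF) (ocl_oc hs u) (oc_anti huv)
    rwa [show oc R (oc R v) = v from hfv] at this
  have step : v ∩ oc R (v ∩ oc R u) = oc R (oc R u) := by
    rw [Set.inter_comm v (oc R u)]
    conv_rhs => rw [h1]
    rw [show oc R (ocl R (oc R v ∪ (oc R u ∩ v))) = oc R (oc R v ∪ (oc R u ∩ v)) from
      oc_ocl hs _, oc_union, show oc R (oc R v) = v from hfv]
  exact step.trans hu

/-- Dual orthomodular law, join form. -/
lemma dom' (h : IsOSpace R F) {u v : Set X} (hu : ocl R u = u) (hvF : v ∈ F)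
    (huv : u ⊆ v) : v ∩ ocl R (oc R v ∪ u) = u := by
  have hfv : ocl R v = v := flat_of_mem h hvF
  have e1 : v ∩ oc R u = oc R (oc R v ∪ u) := by
    rw [oc_union, show oc R (oc R v) = v from hfv]
  have e2 : oc R (v ∩ oc R u) = ocl R (oc R v ∪ u) := congrArg (oc R) e1
  rw [← e2]
  exact dom h hu hvF huv

end Lemmas

section Main

variable {R : X → X → Prop} {F : Set (Set X)}

/-- If the Sasaki projections agree, they equal the intersection. -/
lemma sproj_eq_inter (h : IsOSpace R F) {a b : Set X} (ha : a ∈ F) (hb : b ∈ F)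
    (hcomm : sproj R a b = sproj R b a) : sproj R a b = a ∩ b := by
  have hfa : ocl R a = a := flat_of_mem h ha
  have hfb : ocl R b = b := flat_of_mem h hb
  apply subset_antisymm
  · apply Set.subset_inter
    · rw [hcomm, sproj_flat hfa]; exact Set.inter_subset_left
    · rw [sproj_flat hfb]; exact Set.inter_subset_left
  · rw [sproj_flat hfb]
    refine Set.subset_inter (fun x hx => hx.2) ?_
    intro x hx y hy
    exact h.symm y x (hy.2 x hx.1)

/-- Commutation consequence: `b ∩ (a∩b)' = b ∩ a'`. -/
lemma aux2 (h : IsOSpace R F) {a b : Set X} (ha : a ∈ F) (hb : b ∈ F)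
    (hp : sproj R a b = a ∩ b) : b ∩ oc R (a ∩ b) = b ∩ oc R a := by
  have hs := h.symm
  have hfb : ocl R b = b := flat_of_mem h hb
  -- s := b ∩ oc a ; sproj a b = b ∩ oc (b ∩ oc a)
  set s := b ∩ oc R a with hsdef
  have e1 : b ∩ oc R s = oc R (oc R b ∪ s) := by
    rw [oc_union, show oc R (oc R b) = b from hfb]
  have h1 : oc R (a ∩ b) = ocl R (oc R b ∪ s) := by
    rw [← hp, sproj_flat hfb, e1]; rfl
  have hsflat : ocl R s = s := by
    rw [hsdef, show b ∩ oc R a = oc R (oc R b ∪ a) by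
      rw [oc_union, show oc R (oc R b) = b from hfb]]
    exact ocl_oc hs _
  rw [h1]
  exact dom' h hsflat hb Set.inter_subset_left

/-- `(a∩b)' = a' ∨ (a ∩ b')`. -/
lemma aux3 (h : IsOSpace R F) {a b : Set X} (ha : a ∈ F) (hb : b ∈ F)
    (hp2 : sproj R b a = b ∩ a) :
    oc R (a ∩ b) = ocl R (oc R a ∪ (a ∩ oc R b)) := by
  have hs := h.symm
  have hfa : ocl R a = a := flat_of_mem h ha
  have h2 : a ∩ oc R (b ∩ a) = a ∩ oc R b := aux2 h hb ha hp2
  have h2' : a ∩ oc R (a ∩ b) = a ∩ oc R b := by rw [Set.inter_comm a b]; exact h2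
  have hom := om h (h.oc_mem a ha) (ocl_oc hs (a ∩ b))
      (oc_anti (Set.inter_subset_left : a ∩ b ⊆ a))
  rw [show oc R (oc R a) = a from hfa] at hom
  rw [hom, Set.inter_comm (oc R (a ∩ b)) a, h2']

/-- `a ∩ c' = a ∩ (c ⊗ a)'`. -/
lemma auxE (h : IsOSpace R F) {a : Set X} (ha : a ∈ F) (c : Set X) :
    a ∩ oc R c = a ∩ oc R (sproj R c a) := by
  have hs := h.symm
  have hfa : ocl R a = a := flat_of_mem h ha
  have em : oc R (oc R a ∪ c) = a ∩ oc R c := by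
    rw [oc_union, show oc R (oc R a) = a from hfa]
  have hom := om h (h.oc_mem a ha) (ocl_oc hs (oc R (oc R a ∪ c)))
      ((Set.subset_union_left).trans (subset_ocl hs _))
  -- hom : ocl (oc a ∪ c) = ocl (oc a ∪ (ocl (oc a ∪ c) ∩ oc (oc a)))
  rw [show oc R (oc R a) = a from hfa] at hom
  have hm : oc R (oc R (oc R a ∪ c)) ∩ a = sproj R c a := by
    rw [em, sproj_flat hfa, Set.inter_comm]
  rw [hm] at hom
  -- hom : ocl (oc a ∪ c) = ocl (oc a ∪ sproj c a)
  have final := congrArg (oc R) hom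
  have k1 : oc R (oc R (oc R (oc R a ∪ c))) = a ∩ oc R c := by
    rw [show oc R (oc R (oc R (oc R a ∪ c))) = oc R (oc R a ∪ c) from
      oc_ocl hs (oc R a ∪ c), em]
  have k2 : oc R (ocl R (oc R a ∪ sproj R c a)) = a ∩ oc R (sproj R c a) := by
    rw [oc_ocl hs, oc_union, show oc R (oc R a) = a from hfa]
  exact k1.symm.trans (final.trans k2)

/-- Key lemma: `(c ⊗ a) ⊗ b = c ⊗ (a ∩ b)`. -/
lemma key (h : IsOSpace R F) {a b c : Set X} (ha : a ∈ F) (hb : b ∈ F) (hc : c ∈ F)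
    (hcomm : sproj R a b = sproj R b a) :
    sproj R (sproj R c a) b = sproj R c (a ∩ b) := by
  have hs := h.symm
  have hfa : ocl R a = a := flat_of_mem h ha
  have hfb : ocl R b = b := flat_of_mem h hb
  have hp : sproj R a b = a ∩ b := sproj_eq_inter h ha hb hcomm
  have hp2 : sproj R b a = b ∩ a := sproj_eq_inter h hb ha hcomm.symm
  set p := a ∩ b with hpdef
  have hpF : p ∈ F := hp ▸ h.sproj_mem a ha b hb
  have hfp : ocl R p = p := flat_of_mem h hpF
  set e := sproj R c a with hedef
  have heF : e ∈ F := h.sproj_mem c hc a ha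
  have hfe : ocl R e = e := flat_of_mem h heF
  have hea : e ⊆ a := by rw [hedef, sproj_flat hfa]; exact Set.inter_subset_left
  have hpa : p ⊆ a := Set.inter_subset_left
  have hpb : p ⊆ b := Set.inter_subset_right
  -- rewrite goal
  have g1 : sproj R e b = b ∩ oc R (b ∩ oc R e) := sproj_flat hfb
  have hpc : p ∩ oc R c = p ∩ oc R e := by
    have hE : a ∩ oc R c = a ∩ oc R e := auxE h ha c
    have l1 : p ∩ oc R c = p ∩ (a ∩ oc R c) := by
      rw [← Set.inter_assoc, Set.inter_eq_left.mpr hpa]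
    have l2 : p ∩ oc R e = p ∩ (a ∩ oc R e) := by
      rw [← Set.inter_assoc, Set.inter_eq_left.mpr hpa]
    rw [l1, l2, hE]
  have g2 : sproj R c p = p ∩ oc R (p ∩ oc R e) := by
    rw [sproj_flat hfp, hpc]
  rw [g1, g2]
  apply subset_antisymm
  · apply Set.subset_inter
    · -- ⊆ p
      have m1 : b ∩ oc R a ⊆ b ∩ oc R e := Set.inter_subset_inter_right b (oc_anti hea)
      have : b ∩ oc R (b ∩ oc R e) ⊆ b ∩ oc R (b ∩ oc R a) :=
        Set.inter_subset_inter_right b (oc_anti m1)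
      rw [show b ∩ oc R (b ∩ oc R a) = p from (sproj_flat hfb ▸ hp : _)] at this
      exact this
    · exact Set.inter_subset_right.trans (oc_anti (Set.inter_subset_inter_left _ hpb))
  · apply Set.subset_inter
    · exact Set.inter_subset_left.trans hpb
    · -- p ∩ oc (p ∩ oc e) ⊆ oc (b ∩ oc e)
      set w := ocl R ((a ∩ oc R b) ∪ e) with hwdef
      have hwflat : ocl R w = w := ocl_oc hs _
      have hwa : w ⊆ a :=
        (ocl_mono (Set.union_subset Set.inter_subset_left hea)).trans (le_of_eq hfa)
      -- oc (p ∩ oc e) = ocl (oc a ∪ w)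
      have q1 : p ∩ oc R e = oc R (oc R p ∪ e) := by
        rw [oc_union, show oc R (oc R p) = p from hfp]
      have q2 : oc R (p ∩ oc R e) = ocl R (oc R p ∪ e) := congrArg (oc R) q1
      have q3 : oc R p = ocl R (oc R a ∪ (a ∩ oc R b)) := aux3 h ha hb hp2
      have q4 : ocl R (oc R p ∪ e) = ocl R (oc R a ∪ w) := by
        rw [q3, ocl_union_ocl_left hs, Set.union_assoc, hwdef,
          ocl_union_ocl_right hs]
      have q5 : oc R (p ∩ oc R e) = ocl R (oc R a ∪ w) := q2.trans q4
      have q6 : p ∩ oc R (p ∩ oc R e) ⊆ a ∩ ocl R (oc R a ∪ w) :=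
        Set.inter_subset_inter hpa (le_of_eq q5)
      rw [dom' h hwflat ha hwa] at q6
      have q7 : w ⊆ oc R (b ∩ oc R e) := by
        have e1 : b ∩ oc R e = oc R (oc R b ∪ e) := by
          rw [oc_union, show oc R (oc R b) = b from hfb]
        have : w ⊆ ocl R (oc R b ∪ e) :=
          ocl_mono (Set.union_subset_union_left e Set.inter_subset_right)
        rwa [show ocl R (oc R b ∪ e) = oc R (b ∩ oc R e) from
          (congrArg (oc R) e1.symm : _)] at this
      exact q6.trans q7

end Main


theorem stmt15 (R : X → X → Prop) (F : Set (Set X)) (h : IsOSpace R F)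
    (A B C : Set X) (hA : A ∈ F) (hB : B ∈ F) (hC : C ∈ F)
    (hcomm : sproj R A B = sproj R B A) :
    sproj R (sproj R C A) B = sproj R (sproj R C B) A := by
  rw [key h hA hB hC hcomm, key h hB hA hC hcomm.symm, Set.inter_comm]
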